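/- On a probability space, let s_1,…,s_N, u_1,…,u_N, ε_1,…,ε_N be real random variables such that (s_1,…,s_N,u_1,…,u_N) is independent of (ε_1,…,ε_N), E(ε_i) = 0 for all i, D := (1/N)·Σ_i s_i² > 0 almost surely, and all the random ratios below are integrable. Define y_i = β·(s_i + u_i) + ε_i, β̂_OLS = ((1/N)·Σ_i s_i y_i)/D, η_N = ((1/N)·Σ_i s_i u_i)/D, and η = E(η_N). If η ≠ −1, then the rescaled estimator β̂ := β̂_OLS/(1 + η) is unbiased: E(β̂) = β. -/

import Mathlib

/-!
Wherever `D > 0`, `β̂_OLS = β + β η_N + (1/N) Σ_i (s_i / D) ε_i`. Each weight `s_i / D` is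
a measurable function of `(s, u)`, hence independent of `ε_i`, so the last term has mean
zero and `E β̂_OLS = β (1 + η)`.
-/

open MeasureTheory ProbabilityTheory

namespace ProbabilityTheory

variable {Ω α ι : Type*} [MeasurableSpace Ω] [MeasurableSpace α] {μ : Measure Ω}

theorem IndepFun.integral_comp_mul_eq_zero {X : Ω → α} {Y : Ω → ι → ℝ}
    (hXY : IndepFun X Y μ) {f : α → ℝ} (hf : Measurable f)
    (hfX : AEStronglyMeasurable (fun ω => f (X ω)) μ) (i : ι)
    (hY : AEStronglyMeasurable (fun ω => Y ω i) μ) (hY0 : ∫ ω, Y ω i ∂μ = 0) :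
    ∫ ω, f (X ω) * Y ω i ∂μ = 0 := by
  have hind : IndepFun (fun ω => f (X ω)) (fun ω => Y ω i) μ :=
    hXY.comp hf (measurable_pi_apply i)
  have h := hind.integral_mul_eq_mul_integral hfX hY
  rwa [hY0, mul_zero] at h

end ProbabilityTheory

theorem ols_ratio_eq {ι : Type*} [Fintype ι] (s u e : ι → ℝ) (c β : ℝ)
    (hD : c * ∑ i, s i ^ 2 ≠ 0) :
    (c * ∑ i, s i * (β * (s i + u i) + e i)) / (c * ∑ i, s i ^ 2) =
      β + β * ((c * ∑ i, s i * u i) / (c * ∑ i, s i ^ 2)) +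
        c * ∑ i, s i * e i / (c * ∑ i, s i ^ 2) := by
  have hsum : ∑ i, s i * (β * (s i + u i) + e i) =
      β * ∑ i, s i ^ 2 + β * ∑ i, s i * u i + ∑ i, s i * e i := by
    simp only [Finset.mul_sum, ← Finset.sum_add_distrib]
    exact Finset.sum_congr rfl fun i _ => by ring
  obtain ⟨hc, hS⟩ := mul_ne_zero_iff.mp hD
  rw [hsum, ← Finset.sum_div]
  field_simp

theorem rescaled_estimator_unbiased_general
    {Ω : Type*} [MeasurableSpace Ω] (μ : Measure Ω) [IsProbabilityMeasure μ]
    (N : ℕ)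
    (s u ε : Fin N → Ω → ℝ) (β : ℝ)
    (hindep : IndepFun (fun ω => ((fun i => s i ω, fun i => u i ω) :
        (Fin N → ℝ) × (Fin N → ℝ))) (fun ω => (fun i => ε i ω : Fin N → ℝ)) μ)
    (hε_int : ∀ i, Integrable (ε i) μ)
    (hε_mean : ∀ i, ∫ ω, ε i ω ∂μ = 0)
    (D : Ω → ℝ)
    (hD : ∀ ω, D ω = (1 / (N : ℝ)) * ∑ i, (s i ω) ^ 2)
    (hDpos : ∀ᵐ ω ∂μ, 0 < D ω)
    (y : Fin N → Ω → ℝ)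
    (hy : ∀ i ω, y i ω = β * (s i ω + u i ω) + ε i ω)
    (βhatOLS ηN : Ω → ℝ)
    (hβhatOLS : ∀ ω, βhatOLS ω = ((1 / (N : ℝ)) * ∑ i, s i ω * y i ω) / D ω)
    (hηN : ∀ ω, ηN ω = ((1 / (N : ℝ)) * ∑ i, s i ω * u i ω) / D ω)
    (hηN_int : Integrable ηN μ)
    (hratio_int : ∀ i, Integrable (fun ω => s i ω / D ω) μ)
    (hratio_int' : ∀ i, Integrable (fun ω => s i ω * ε i ω / D ω) μ)
    (η : ℝ) (hη : η = ∫ ω, ηN ω ∂μ) (hη_ne : η ≠ -1) :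
    (∫ ω, βhatOLS ω / (1 + η) ∂μ) = β := by
  have hcross : ∀ i, ∫ ω, s i ω * ε i ω / D ω ∂μ = 0 := fun i => by
    have h := hindep.integral_comp_mul_eq_zero
      (f := fun p => p.1 i / ((1 / (N : ℝ)) * ∑ j, p.1 j ^ 2)) (by fun_prop)
      (by simpa only [hD] using (hratio_int i).aestronglyMeasurable) i
      (hε_int i).aestronglyMeasurable (hε_mean i)
    simpa only [div_mul_eq_mul_div, ← hD] using h
  have hdecomp : βhatOLS =ᵐ[μ] fun ω =>
      β + β * ηN ω + (1 / (N : ℝ)) * ∑ i, s i ω * ε i ω / D ω := by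
    filter_upwards [hDpos] with ω hpos
    simp only [hβhatOLS, hηN, hy, hD] at hpos ⊢
    exact ols_ratio_eq (s · ω) (u · ω) (ε · ω) _ β hpos.ne'
  have hnoise_int : Integrable (fun ω => (1 / (N : ℝ)) * ∑ i, s i ω * ε i ω / D ω) μ :=
    (integrable_finsetSum _ fun i _ => hratio_int' i).const_mul _
  have hnoise : ∫ ω, (1 / (N : ℝ)) * ∑ i, s i ω * ε i ω / D ω ∂μ = 0 := by
    rw [integral_const_mul, integral_finsetSum _ fun i _ => hratio_int' i]
    simp only [hcross, Finset.sum_const_zero, mul_zero]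
  have hsignal_int : Integrable (fun ω => β + β * ηN ω) μ :=
    (integrable_const β).add (hηN_int.const_mul β)
  have hmean : ∫ ω, βhatOLS ω ∂μ = β * (1 + η) := by
    rw [integral_congr_ae hdecomp, integral_add hsignal_int hnoise_int, hnoise,
      integral_add (integrable_const β) (hηN_int.const_mul β), integral_const,
      integral_const_mul, ← hη]
    simp only [probReal_univ, one_smul]
    ring
  have h1η : 1 + η ≠ 0 := fun h => hη_ne (by linarith)
  rw [integral_div, hmean, mul_div_cancel_right₀ β h1η]

/-- Under independence of `(s, u)` from the centered shocks `ε` and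
integrability of the relevant random ratios, the rescaled estimator
`β̂ = β̂_OLS / (1 + η)` with `η = E(η_N)` is an unbiased estimator of `β`. -/
theorem rescaled_estimator_unbiased
    {Ω : Type*} [MeasurableSpace Ω] (μ : Measure Ω) [IsProbabilityMeasure μ]
    (N : ℕ) (hN : 1 ≤ N)
    (s u ε : Fin N → Ω → ℝ) (β : ℝ)
    (hindep : IndepFun (fun ω => ((fun i => s i ω, fun i => u i ω) :
        (Fin N → ℝ) × (Fin N → ℝ))) (fun ω => (fun i => ε i ω : Fin N → ℝ)) μ)
    (hε_int : ∀ i, Integrable (ε i) μ)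
    (hε_mean : ∀ i, ∫ ω, ε i ω ∂μ = 0)
    (D : Ω → ℝ)
    (hD : ∀ ω, D ω = (1 / (N : ℝ)) * ∑ i, (s i ω) ^ 2)
    (hDpos : ∀ᵐ ω ∂μ, 0 < D ω)
    (y : Fin N → Ω → ℝ)
    (hy : ∀ i ω, y i ω = β * (s i ω + u i ω) + ε i ω)
    (βhatOLS ηN : Ω → ℝ)
    (hβhatOLS : ∀ ω, βhatOLS ω = ((1 / (N : ℝ)) * ∑ i, s i ω * y i ω) / D ω)
    (hηN : ∀ ω, ηN ω = ((1 / (N : ℝ)) * ∑ i, s i ω * u i ω) / D ω)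
    (hβhat_int : Integrable βhatOLS μ)
    (hηN_int : Integrable ηN μ)
    (hratio_int : ∀ i, Integrable (fun ω => s i ω / D ω) μ)
    (hratio_int' : ∀ i, Integrable (fun ω => s i ω * ε i ω / D ω) μ)
    (η : ℝ) (hη : η = ∫ ω, ηN ω ∂μ) (hη_ne : η ≠ -1) :
    (∫ ω, βhatOLS ω / (1 + η) ∂μ) = β :=
  rescaled_estimator_unbiased_general μ N s u ε β hindep hε_int hε_mean D hD hDpos y hy βhatOLS ηN
    hβhatOLS hηN hηN_int hratio_int hratio_int' η hη hη_ne
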